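/- arXiv:1110.1697 — 3 statements merged into one kernel-verified Lean document; each statement's English description precedes it below -/
import Mathlib

section
/- Let H, G₁,…,G_m be real Hilbert spaces, ωᵢ ∈ (0,1] with ∑ωᵢ = 1, τ, σ₁,…,σ_m > 0 with τ ∑ᵢ σᵢωᵢ‖Lᵢ‖² < 1, and Lᵢ : H → Gᵢ bounded linear. On K = H ⊕ G₁ ⊕ ⋯ ⊕ G_m with inner product ⟨(x,v),(y,w)⟩ = ⟨x,y⟩ + ∑ᵢωᵢ⟨vᵢ,wᵢ⟩, define V(x,v₁,…,v_m) = (τ⁻¹x − ∑ᵢ ωᵢLᵢ*vᵢ, σ₁⁻¹v₁ − L₁x, …, σ_m⁻¹v_m − L_m x). Then V is self-adjoint and ρ-strongly positive, i.e., ⟨u, Vu⟩_K ≥ ρ‖u‖²_K for all u ∈ K, where ρ = min{τ⁻¹, σ₁⁻¹, …, σ_m⁻¹}·(1 − (τ ∑ᵢ σᵢωᵢ‖Lᵢ‖²)^{1/2}). -/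
open scoped RealInnerProductSpace

/-!
Moving each `Lᵢ` across the inner product with its adjoint turns `⟨u, V w⟩_K` into an explicitly
symmetric bilinear form, which gives self-adjointness. On the diagonal,
`⟨u, V u⟩_K = N(u) − 2 ∑ ωᵢ ⟨Lᵢ x, vᵢ⟩` with `N(u) = τ⁻¹‖x‖² + ∑ σᵢ⁻¹ ωᵢ ‖vᵢ‖²`. Weighted
Cauchy–Schwarz, pairing `σᵢωᵢ‖Lᵢ‖²‖x‖²` with `σᵢ⁻¹ωᵢ‖vᵢ‖²`, bounds the square of the cross term by
`β² · τ⁻¹‖x‖² · ∑ σᵢ⁻¹ωᵢ‖vᵢ‖²` with `β = √(τ ∑ σᵢωᵢ‖Lᵢ‖²)`, so by AM–GM twice the cross term is at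
most `β N(u)`. Hence `⟨u, V u⟩_K ≥ (1 − β) N(u) ≥ (1 − β) min{τ⁻¹, σᵢ⁻¹} ‖u‖²_K`.
-/

theorem two_mul_le_sqrt_mul_add_of_sq_le {c S X P : ℝ} (hS : 0 ≤ S) (hX : 0 ≤ X) (hP : 0 ≤ P)
    (h : c ^ 2 ≤ S * X * P) : 2 * c ≤ √S * (X + P) := by
  have hsq : (2 * c) ^ 2 ≤ (√S * (X + P)) ^ 2 := by
    rw [mul_pow, mul_pow, Real.sq_sqrt hS]
    nlinarith [sq_nonneg (X - P)]
  exact (le_abs_self _).trans (abs_le_of_sq_le_sq hsq (by positivity))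

theorem min_iInf_mul_add_sum_le {ι : Type*} [Fintype ι] {a p : ℝ} {b q : ι → ℝ}
    (hp : 0 ≤ p) (hq : ∀ i, 0 ≤ q i) :
    min a (⨅ i, b i) * (p + ∑ i, q i) ≤ a * p + ∑ i, b i * q i := by
  rw [mul_add, Finset.mul_sum]
  refine add_le_add (mul_le_mul_of_nonneg_right (min_le_left _ _) hp)
    (Finset.sum_le_sum fun i _ => mul_le_mul_of_nonneg_right ?_ (hq i))
  exact (min_le_right _ _).trans (ciInf_le (Set.finite_range b).bddBelow i)

section PrimalDual

variable {H : Type*} [NormedAddCommGroup H] [InnerProductSpace ℝ H]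
  {ι : Type*} [Fintype ι] {G : ι → Type*} [∀ i, NormedAddCommGroup (G i)]
  [∀ i, InnerProductSpace ℝ (G i)]
  (ω σ : ι → ℝ) (τ : ℝ) (L : ∀ i, H →L[ℝ] G i)

theorem two_mul_sum_inner_le (hω : ∀ i, 0 ≤ ω i) (hσ : ∀ i, 0 < σ i) (hτ : 0 < τ)
    (x : H) (v : ∀ i, G i) :
    2 * ∑ i, ω i * ⟪L i x, v i⟫ ≤ √(τ * ∑ i, σ i * ω i * ‖L i‖ ^ 2) *
      (τ⁻¹ * ‖x‖ ^ 2 + ∑ i, (σ i)⁻¹ * (ω i * ‖v i‖ ^ 2)) := by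
  have hσω : ∀ i, 0 ≤ σ i * ω i := fun i => mul_nonneg (hσ i).le (hω i)
  refine two_mul_le_sqrt_mul_add_of_sq_le
    (mul_nonneg hτ.le (Finset.sum_nonneg fun i _ => by have := hσω i; positivity))
    (by positivity) (Finset.sum_nonneg fun i _ => by have := hσ i; have := hω i; positivity) ?_
  have hterm : ∀ i ∈ Finset.univ, (ω i * ⟪L i x, v i⟫) ^ 2 ≤
      (σ i * ω i * ‖L i‖ ^ 2 * ‖x‖ ^ 2) * ((σ i)⁻¹ * (ω i * ‖v i‖ ^ 2)) := by
    intro i _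
    have hinner : |⟪L i x, v i⟫| ≤ ‖L i‖ * ‖x‖ * ‖v i‖ :=
      (abs_real_inner_le_norm _ _).trans
        (mul_le_mul_of_nonneg_right ((L i).le_opNorm x) (norm_nonneg _))
    have hσi := (hσ i).ne'
    calc (ω i * ⟪L i x, v i⟫) ^ 2 = ω i ^ 2 * |⟪L i x, v i⟫| ^ 2 := by rw [mul_pow, sq_abs]
      _ ≤ ω i ^ 2 * (‖L i‖ * ‖x‖ * ‖v i‖) ^ 2 := by gcongr
      _ = _ := by field_simp
  calc (∑ i, ω i * ⟪L i x, v i⟫) ^ 2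
      ≤ (∑ i, σ i * ω i * ‖L i‖ ^ 2 * ‖x‖ ^ 2) * ∑ i, (σ i)⁻¹ * (ω i * ‖v i‖ ^ 2) :=
        Finset.sum_sq_le_sum_mul_sum_of_sq_le_mul _
          (fun i _ => by have := hσω i; positivity)
          (fun i _ => by have := hσ i; have := hω i; positivity) hterm
    _ = _ := by rw [← Finset.sum_mul]; field_simp

/-- The bilinear form `(x, v), (y, w) ↦ ⟨(x, v), V (y, w)⟩_K`. -/
noncomputable def primalDualForm (x y : H) (v w : ∀ i, G i) : ℝ :=
  τ⁻¹ * ⟪x, y⟫ + ∑ i, ω i * ((σ i)⁻¹ * ⟪v i, w i⟫ - ⟪L i x, w i⟫ - ⟪L i y, v i⟫)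

theorem primalDualForm_comm (x y : H) (v w : ∀ i, G i) :
    primalDualForm ω σ τ L x y v w = primalDualForm ω σ τ L y x w v := by
  simp only [primalDualForm, real_inner_comm x y]
  congr 1
  refine Finset.sum_congr rfl fun i _ => ?_
  rw [real_inner_comm (v i) (w i)]
  ring

theorem primalDualForm_self (x : H) (v : ∀ i, G i) :
    primalDualForm ω σ τ L x x v v = τ⁻¹ * ‖x‖ ^ 2 + ∑ i, (σ i)⁻¹ * (ω i * ‖v i‖ ^ 2) -
      2 * ∑ i, ω i * ⟪L i x, v i⟫ := by
  simp only [primalDualForm, real_inner_self_eq_norm_sq, Finset.mul_sum, ← Finset.sum_sub_distrib,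
    add_sub_assoc]
  congr 1
  refine Finset.sum_congr rfl fun i _ => ?_
  ring

theorem mul_normSq_le_primalDualForm_self (hω : ∀ i, 0 ≤ ω i) (hσ : ∀ i, 0 < σ i) (hτ : 0 < τ)
    (hsmall : τ * ∑ i, σ i * ω i * ‖L i‖ ^ 2 ≤ 1) (x : H) (v : ∀ i, G i) :
    min τ⁻¹ (⨅ i, (σ i)⁻¹) * (1 - √(τ * ∑ i, σ i * ω i * ‖L i‖ ^ 2)) *
      (‖x‖ ^ 2 + ∑ i, ω i * ‖v i‖ ^ 2) ≤ primalDualForm ω σ τ L x x v v := by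
  have hβ : √(τ * ∑ i, σ i * ω i * ‖L i‖ ^ 2) ≤ 1 := Real.sqrt_le_one.mpr hsmall
  have hmin := min_iInf_mul_add_sum_le (a := τ⁻¹) (b := fun i => (σ i)⁻¹) (sq_nonneg ‖x‖)
    fun i => mul_nonneg (hω i) (sq_nonneg ‖v i‖)
  have hcross := two_mul_sum_inner_le ω σ τ L hω hσ hτ x v
  rw [primalDualForm_self]
  linarith [mul_le_mul_of_nonneg_left hmin (sub_nonneg.mpr hβ)]

variable [CompleteSpace H] [∀ i, CompleteSpace (G i)]

theorem inner_primalDualOp_eq_primalDualForm (x y : H) (v w : ∀ i, G i) :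
    ⟪x, τ⁻¹ • y - ∑ i, ω i • ContinuousLinearMap.adjoint (L i) (w i)⟫ +
        ∑ i, ω i * ⟪v i, (σ i)⁻¹ • w i - L i y⟫ = primalDualForm ω σ τ L x y v w := by
  simp only [primalDualForm, inner_sub_right, inner_smul_right, inner_sum,
    ContinuousLinearMap.adjoint_inner_right, real_inner_comm (L _ y), mul_sub,
    Finset.sum_sub_distrib]
  ring

end PrimalDual

theorem V_selfAdjoint_stronglyPositive_general {H : Type*} [NormedAddCommGroup H]
    [InnerProductSpace ℝ H] [CompleteSpace H] {m : ℕ} (G : Fin m → Type*)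
    [∀ i, NormedAddCommGroup (G i)] [∀ i, InnerProductSpace ℝ (G i)]
    [∀ i, CompleteSpace (G i)]
    (ω σ : Fin m → ℝ) (τ : ℝ) (hω : ∀ i, 0 < ω i ∧ ω i ≤ 1)
    (hσ : ∀ i, 0 < σ i) (hτ : 0 < τ)
    (L : ∀ i, H →L[ℝ] G i)
    (hsmall : τ * ∑ i, σ i * ω i * ‖L i‖ ^ 2 < 1)
    (ρ : ℝ)
    (hρ : ρ = min τ⁻¹ (⨅ i, (σ i)⁻¹) *
      (1 - Real.sqrt (τ * ∑ i, σ i * ω i * ‖L i‖ ^ 2)))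
    -- V₁ and V₂ are the two components of V
    (V₁ : H → (∀ i, G i) → H) (V₂ : H → (∀ i, G i) → ∀ i, G i)
    (hV₁ : ∀ x v, V₁ x v = τ⁻¹ • x - ∑ i, ω i • (ContinuousLinearMap.adjoint (L i)) (v i))
    (hV₂ : ∀ x v i, V₂ x v i = (σ i)⁻¹ • v i - L i x) :
    (∀ (x y : H) (v w : ∀ i, G i),
        ⟪x, V₁ y w⟫ + ∑ i, ω i * ⟪v i, V₂ y w i⟫ =
          ⟪V₁ x v, y⟫ + ∑ i, ω i * ⟪V₂ x v i, w i⟫) ∧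
      ∀ (x : H) (v : ∀ i, G i),
        ρ * (‖x‖ ^ 2 + ∑ i, ω i * ‖v i‖ ^ 2) ≤
          ⟪x, V₁ x v⟫ + ∑ i, ω i * ⟪v i, V₂ x v i⟫ := by
  have hform : ∀ x y v w, ⟪x, V₁ y w⟫ + ∑ i, ω i * ⟪v i, V₂ y w i⟫ =
      primalDualForm ω σ τ L x y v w := fun x y v w => by
    simp only [hV₁, hV₂]
    exact inner_primalDualOp_eq_primalDualForm ω σ τ L x y v w
  refine ⟨fun x y v w => ?_, fun x v => ?_⟩
  · rw [hform, primalDualForm_comm, ← hform]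
    simp only [real_inner_comm]
  · rw [hform, hρ]
    exact mul_normSq_le_primalDualForm_self ω σ τ L (fun i => (hω i).1.le) hσ hτ hsmall.le x v

/-- The operator V(x,v) = (τ⁻¹x − ∑ᵢωᵢLᵢ*vᵢ, (σᵢ⁻¹vᵢ − Lᵢx)ᵢ) on the weighted product
space K is self-adjoint and ρ-strongly positive, with
ρ = min{τ⁻¹,σ₁⁻¹,…,σ_m⁻¹}(1 − √(τ∑ᵢσᵢωᵢ‖Lᵢ‖²)).  The weighted inner product on K is
unfolded as ⟨(x,v),(y,w)⟩_K = ⟨x,y⟩ + ∑ᵢωᵢ⟨vᵢ,wᵢ⟩. -/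
theorem V_selfAdjoint_stronglyPositive {H : Type*} [NormedAddCommGroup H]
    [InnerProductSpace ℝ H] [CompleteSpace H] {m : ℕ} (hm : 0 < m) (G : Fin m → Type*)
    [∀ i, NormedAddCommGroup (G i)] [∀ i, InnerProductSpace ℝ (G i)]
    [∀ i, CompleteSpace (G i)]
    (ω σ : Fin m → ℝ) (τ : ℝ) (hω : ∀ i, 0 < ω i ∧ ω i ≤ 1) (hωsum : ∑ i, ω i = 1)
    (hσ : ∀ i, 0 < σ i) (hτ : 0 < τ)
    (L : ∀ i, H →L[ℝ] G i)
    (hsmall : τ * ∑ i, σ i * ω i * ‖L i‖ ^ 2 < 1)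
    (ρ : ℝ)
    (hρ : ρ = min τ⁻¹ (⨅ i, (σ i)⁻¹) *
      (1 - Real.sqrt (τ * ∑ i, σ i * ω i * ‖L i‖ ^ 2)))
    -- V₁ and V₂ are the two components of V
    (V₁ : H → (∀ i, G i) → H) (V₂ : H → (∀ i, G i) → ∀ i, G i)
    (hV₁ : ∀ x v, V₁ x v = τ⁻¹ • x - ∑ i, ω i • (ContinuousLinearMap.adjoint (L i)) (v i))
    (hV₂ : ∀ x v i, V₂ x v i = (σ i)⁻¹ • v i - L i x) :
    (∀ (x y : H) (v w : ∀ i, G i),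
        ⟪x, V₁ y w⟫ + ∑ i, ω i * ⟪v i, V₂ y w i⟫ =
          ⟪V₁ x v, y⟫ + ∑ i, ω i * ⟪V₂ x v i, w i⟫) ∧
      ∀ (x : H) (v : ∀ i, G i),
        ρ * (‖x‖ ^ 2 + ∑ i, ω i * ‖v i‖ ^ 2) ≤
          ⟪x, V₁ x v⟫ + ∑ i, ω i * ⟪v i, V₂ x v i⟫ :=
  V_selfAdjoint_stronglyPositive_general G ω σ τ hω hσ hτ L hsmall ρ hρ V₁ V₂ hV₁ hV₂
end

section
/- Let Q : K → K be β-cocoercive on a real Hilbert space K (β > 0) and let V be a bounded linear self-adjoint ρ-strongly positive operator. Then B = V⁻¹∘Q is (βρ)-cocoercive with respect to the inner product ⟨x,y⟩_V = ⟨x, Vy⟩, i.e., ⟨x−y, Bx−By⟩_V ≥ βρ ‖Bx−By‖_V² for all x,y ∈ K. -/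
/-! Strong positivity and Cauchy–Schwarz give `ρ‖u‖ ≤ ‖V u‖`, hence `ρ ‖u‖_V² ≤ ‖V u‖²`.
For `u = Bx − By` we have `V u = Qx − Qy`, so the cocoercivity of `Q` bounds `β‖V u‖²`
by `⟨x − y, V u⟩`. -/

open scoped RealInnerProductSpace

section

variable {E : Type*} [NormedAddCommGroup E] [InnerProductSpace ℝ E]

theorem mul_norm_le_norm_of_mul_sq_le_inner {u v : E} {ρ : ℝ} (h : ρ * ‖u‖ ^ 2 ≤ ⟪u, v⟫) :
    ρ * ‖u‖ ≤ ‖v‖ := by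
  rcases (norm_nonneg u).eq_or_lt with hu | hu
  · rw [← hu, mul_zero]
    exact norm_nonneg v
  · refine le_of_mul_le_mul_right ?_ hu
    calc ρ * ‖u‖ * ‖u‖ = ρ * ‖u‖ ^ 2 := by ring
      _ ≤ ⟪u, v⟫ := h
      _ ≤ ‖u‖ * ‖v‖ := real_inner_le_norm u v
      _ = ‖v‖ * ‖u‖ := mul_comm _ _

theorem mul_inner_le_norm_sq_of_mul_sq_le_inner {u v : E} {ρ : ℝ} (hρ : 0 ≤ ρ)
    (h : ρ * ‖u‖ ^ 2 ≤ ⟪u, v⟫) : ρ * ⟪u, v⟫ ≤ ‖v‖ ^ 2 :=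
  calc ρ * ⟪u, v⟫ ≤ ρ * (‖u‖ * ‖v‖) := mul_le_mul_of_nonneg_left (real_inner_le_norm u v) hρ
    _ = ρ * ‖u‖ * ‖v‖ := (mul_assoc _ _ _).symm
    _ ≤ ‖v‖ * ‖v‖ :=
        mul_le_mul_of_nonneg_right (mul_norm_le_norm_of_mul_sq_le_inner h) (norm_nonneg v)
    _ = ‖v‖ ^ 2 := (sq _).symm

end

theorem Vinv_comp_cocoercive_general {K : Type*} [NormedAddCommGroup K] [InnerProductSpace ℝ K]
    (β : ℝ) (hβ : 0 < β) (Q : K → K)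
    (hQ : ∀ x y : K, β * ‖Q x - Q y‖ ^ 2 ≤ ⟪x - y, Q x - Q y⟫)
    (V : K →L[ℝ] K)
    (ρ : ℝ) (hρ : 0 < ρ) (hpos : ∀ u : K, ρ * ‖u‖ ^ 2 ≤ ⟪u, V u⟫) :
    ∀ x y bx by' : K, V bx = Q x → V by' = Q y →
      β * ρ * ⟪bx - by', V (bx - by')⟫ ≤ ⟪x - y, V (bx - by')⟫ := by
  intro x y bx by' hbx hby
  have hV : V (bx - by') = Q x - Q y := by rw [map_sub, hbx, hby]
  calc β * ρ * ⟪bx - by', V (bx - by')⟫ = β * (ρ * ⟪bx - by', V (bx - by')⟫) := mul_assoc _ _ _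
    _ ≤ β * ‖V (bx - by')‖ ^ 2 :=
        mul_le_mul_of_nonneg_left
          (mul_inner_le_norm_sq_of_mul_sq_le_inner hρ.le (hpos _)) hβ.le
    _ ≤ ⟪x - y, V (bx - by')⟫ := hV ▸ hQ x y

/-- If Q is β-cocoercive and V is bounded linear self-adjoint ρ-strongly positive, then
B = V⁻¹∘Q is (βρ)-cocoercive in the V-inner product ⟨x,y⟩_V = ⟨x,Vy⟩: whenever
V bx = Qx and V by = Qy, we have ⟨x−y, bx−by⟩_V ≥ βρ‖bx−by‖_V². -/
theorem Vinv_comp_cocoercive {K : Type*} [NormedAddCommGroup K] [InnerProductSpace ℝ K]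
    [CompleteSpace K]
    (β : ℝ) (hβ : 0 < β) (Q : K → K)
    (hQ : ∀ x y : K, β * ‖Q x - Q y‖ ^ 2 ≤ ⟪x - y, Q x - Q y⟫)
    (V : K →L[ℝ] K) (hsa : ∀ u w : K, ⟪u, V w⟫ = ⟪V u, w⟫)
    (ρ : ℝ) (hρ : 0 < ρ) (hpos : ∀ u : K, ρ * ‖u‖ ^ 2 ≤ ⟪u, V u⟫) :
    ∀ x y bx by' : K, V bx = Q x → V by' = Q y →
      β * ρ * ⟪bx - by', V (bx - by')⟫ ≤ ⟪x - y, V (bx - by')⟫ :=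
  Vinv_comp_cocoercive_general β hβ Q hQ V ρ hρ hpos
end

section
/- Let H be a real Hilbert space, A : H → 2^H maximally monotone, and B : H → H β-cocoercive with β > 1/2. Given x₀ ∈ H, λₙ ∈ [ε, 1] with ε ∈ (0,1), and the exact iteration xₙ₊₁ = xₙ + λₙ(J_A(xₙ − Bxₙ) − xₙ), if zer(A+B) ≠ ∅ then ∑ₙ ‖Bxₙ − Bx̄‖² < ∞ for every x̄ ∈ zer(A+B); in particular Bxₙ → Bx̄. -/
/-!
With `p = J (x - B x)`, monotonicity of `A` at the pairs `(p, x - B x - p)` and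
`(x̄, -B x̄)`, cocoercivity of `B` and `2⟪a, b⟫ ≥ -‖a‖² - ‖b‖²` give
`2⟪x - x̄, p - x⟫ ≤ -‖p - x‖² - (2β - 1)‖B x - B x̄‖²`. Since `λ² ≤ λ`, the relaxed step is then
Fejér monotone with a gain: `ε(2β - 1)‖B xₙ - B x̄‖² ≤ ‖xₙ - x̄‖² - ‖xₙ₊₁ - x̄‖²`, and
telescoping bounds the partial sums by `‖x₀ - x̄‖² / (ε(2β - 1))`.
-/

open scoped RealInnerProductSpace

/-- A set-valued operator is maximally monotone if it is monotone and its graph is not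
properly contained in the graph of another monotone operator. -/
def MaximallyMonotone {H : Type*} [NormedAddCommGroup H] [InnerProductSpace ℝ H]
    (A : H → Set H) : Prop :=
  (∀ x y u v : H, u ∈ A x → v ∈ A y → 0 ≤ ⟪x - y, u - v⟫) ∧
    ∀ x u : H, (∀ y v : H, v ∈ A y → 0 ≤ ⟪x - y, u - v⟫) → u ∈ A x

open Filter Topology

section
variable {H : Type*} [NormedAddCommGroup H] [InnerProductSpace ℝ H]

theorem two_inner_sub_le_of_monotone_of_cocoercive {A : H → Set H}
    (hA : ∀ x y u v : H, u ∈ A x → v ∈ A y → 0 ≤ ⟪x - y, u - v⟫) {B : H → H} {β : ℝ}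
    (hB : ∀ x y : H, β * ‖B x - B y‖ ^ 2 ≤ ⟪x - y, B x - B y⟫) {x p xbar : H}
    (hp : x - B x - p ∈ A p) (hxbar : -B xbar ∈ A xbar) :
    2 * ⟪x - xbar, p - x⟫ ≤ -‖p - x‖ ^ 2 - (2 * β - 1) * ‖B x - B xbar‖ ^ 2 := by
  have hmono : 0 ≤ ⟪(p - x) + (x - xbar), -((p - x) + (B x - B xbar))⟫ := by
    convert hA _ _ _ _ hp hxbar using 2 <;> abel
  have hsq : 0 ≤ ‖(p - x) + (B x - B xbar)‖ ^ 2 := sq_nonneg _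
  rw [inner_neg_right, inner_add_left, inner_add_right, inner_add_right,
    real_inner_self_eq_norm_sq] at hmono
  rw [norm_add_sq_real] at hsq
  have := hB x xbar
  linarith

theorem norm_add_smul_sq_le {v d : H} {l : ℝ} (hl0 : 0 ≤ l) (hl1 : l ≤ 1) :
    ‖v + l • d‖ ^ 2 ≤ ‖v‖ ^ 2 + l * (2 * ⟪v, d⟫ + ‖d‖ ^ 2) := by
  rw [norm_add_sq_real, real_inner_smul_right, norm_smul, Real.norm_of_nonneg hl0]
  nlinarith [mul_nonneg (mul_nonneg hl0 (sub_nonneg.2 hl1)) (sq_nonneg ‖d‖)]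

theorem norm_relaxed_forward_backward_sub_sq_le {A : H → Set H}
    (hA : ∀ x y u v : H, u ∈ A x → v ∈ A y → 0 ≤ ⟪x - y, u - v⟫) {B : H → H} {β : ℝ}
    (hB : ∀ x y : H, β * ‖B x - B y‖ ^ 2 ≤ ⟪x - y, B x - B y⟫) {x p xbar : H}
    (hp : x - B x - p ∈ A p) (hxbar : -B xbar ∈ A xbar) {l : ℝ} (hl0 : 0 ≤ l) (hl1 : l ≤ 1) :
    ‖x + l • (p - x) - xbar‖ ^ 2 ≤ ‖x - xbar‖ ^ 2 - l * (2 * β - 1) * ‖B x - B xbar‖ ^ 2 := by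
  have hstep := two_inner_sub_le_of_monotone_of_cocoercive hA hB hp hxbar
  calc ‖x + l • (p - x) - xbar‖ ^ 2 = ‖(x - xbar) + l • (p - x)‖ ^ 2 := by
        rw [add_sub_right_comm]
    _ ≤ ‖x - xbar‖ ^ 2 + l * (2 * ⟪x - xbar, p - x⟫ + ‖p - x‖ ^ 2) :=
        norm_add_smul_sq_le hl0 hl1
    _ ≤ ‖x - xbar‖ ^ 2 - l * (2 * β - 1) * ‖B x - B xbar‖ ^ 2 := by
        nlinarith [mul_le_mul_of_nonneg_left hstep hl0]

end

theorem summable_of_mul_le_sub_succ {f g : ℕ → ℝ} {c : ℝ} (hc : 0 < c) (hf : ∀ n, 0 ≤ f n)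
    (hg : ∀ n, 0 ≤ g n) (h : ∀ n, c * f n ≤ g n - g (n + 1)) : Summable f := by
  refine summable_of_sum_range_le (c := g 0 / c) hf fun N => ?_
  rw [le_div_iff₀' hc, Finset.mul_sum]
  calc ∑ k ∈ Finset.range N, c * f k ≤ ∑ k ∈ Finset.range N, (g k - g (k + 1)) :=
        Finset.sum_le_sum fun k _ => h k
    _ = g 0 - g N := Finset.sum_range_sub' g N
    _ ≤ g 0 := sub_le_self _ (hg N)

theorem tendsto_of_summable_norm_sub_sq {E : Type*} [SeminormedAddCommGroup E] {y : ℕ → E}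
    {a : E} (h : Summable fun n => ‖y n - a‖ ^ 2) : Tendsto y atTop (𝓝 a) := by
  rw [tendsto_iff_norm_sub_tendsto_zero]
  simpa [Real.sqrt_sq (norm_nonneg _)] using h.tendsto_atTop_zero.sqrt

theorem forward_backward_summable_general {H : Type*} [NormedAddCommGroup H]
    [InnerProductSpace ℝ H]
    (A : H → Set H) (hA : MaximallyMonotone A)
    (J : H → H) (hJ : ∀ z p : H, J z = p ↔ z - p ∈ A p)
    (β : ℝ) (hβ : 1 / 2 < β) (B : H → H)
    (hB : ∀ x y : H, β * ‖B x - B y‖ ^ 2 ≤ ⟪x - y, B x - B y⟫)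
    (ε : ℝ) (hε : 0 < ε)
    (lam : ℕ → ℝ) (hlam : ∀ n, ε ≤ lam n ∧ lam n ≤ 1)
    (x : ℕ → H) (hiter : ∀ n, x (n + 1) = x n + lam n • (J (x n - B (x n)) - x n)) :
    ∀ xbar : H, -B xbar ∈ A xbar →
      Summable (fun n => ‖B (x n) - B xbar‖ ^ 2) ∧
        Filter.Tendsto (fun n => B (x n)) Filter.atTop (nhds (B xbar)) := by
  intro xbar hxbar
  have hgain : 0 < 2 * β - 1 := by linarith
  have hstep : ∀ n, ε * (2 * β - 1) * ‖B (x n) - B xbar‖ ^ 2 ≤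
      ‖x n - xbar‖ ^ 2 - ‖x (n + 1) - xbar‖ ^ 2 := fun n => by
    obtain ⟨hεl, hl1⟩ := hlam n
    have hfejer := norm_relaxed_forward_backward_sub_sq_le hA.1 hB
      ((hJ (x n - B (x n)) _).1 rfl) hxbar (hε.le.trans hεl) hl1
    rw [← hiter n] at hfejer
    have hrate : ε * (2 * β - 1) * ‖B (x n) - B xbar‖ ^ 2 ≤
        lam n * (2 * β - 1) * ‖B (x n) - B xbar‖ ^ 2 := by gcongr
    linarith
  have hsum : Summable fun n => ‖B (x n) - B xbar‖ ^ 2 :=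
    summable_of_mul_le_sub_succ (mul_pos hε hgain) (fun n => sq_nonneg _)
      (fun n => sq_nonneg _) hstep
  exact ⟨hsum, tendsto_of_summable_norm_sub_sq hsum⟩

/-- Summability of (‖Bxₙ − Bx̄‖²) along the relaxed forward-backward iteration
xₙ₊₁ = xₙ + λₙ(J_A(xₙ − Bxₙ) − xₙ), where A is maximally monotone with resolvent
J_A = (Id + A)⁻¹, B is β-cocoercive with β > 1/2, λₙ ∈ [ε,1], and x̄ ∈ zer(A+B);
in particular Bxₙ → Bx̄. -/
theorem forward_backward_summable {H : Type*} [NormedAddCommGroup H]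
    [InnerProductSpace ℝ H] [CompleteSpace H]
    (A : H → Set H) (hA : MaximallyMonotone A)
    (J : H → H) (hJ : ∀ z p : H, J z = p ↔ z - p ∈ A p)
    (β : ℝ) (hβ : 1 / 2 < β) (B : H → H)
    (hB : ∀ x y : H, β * ‖B x - B y‖ ^ 2 ≤ ⟪x - y, B x - B y⟫)
    (ε : ℝ) (hε : 0 < ε) (hε1 : ε < 1)
    (lam : ℕ → ℝ) (hlam : ∀ n, ε ≤ lam n ∧ lam n ≤ 1)
    (x : ℕ → H) (hiter : ∀ n, x (n + 1) = x n + lam n • (J (x n - B (x n)) - x n)) :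
    ∀ xbar : H, -B xbar ∈ A xbar →
      Summable (fun n => ‖B (x n) - B xbar‖ ^ 2) ∧
        Filter.Tendsto (fun n => B (x n)) Filter.atTop (nhds (B xbar)) :=
  forward_backward_summable_general A hA J hJ β hβ B hB ε hε lam hlam x hiter
end
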